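/- Let d ≥ 1 and p ∈ [3,4]. There exists a constant C > 0 depending only on p such that for every measure μ on a measurable space Ω and all u, v : Ω → ℝ^d belonging to L^{3(p−2)}(μ) ∩ L⁶(μ), there holds ‖ ‖u‖^{p−2}u − ‖v‖^{p−2}v ‖_{L²(μ)} ≤ C · ( ‖u‖_{L^{3(p−2)}(μ)}^{p−2} + ‖v‖_{L^{3(p−2)}(μ)}^{p−2} ) · ‖u − v‖_{L⁶(μ)}. -/

import Mathlib

/-!
Pointwise, assume `‖b‖ ≤ ‖a‖` and split
`‖a‖^q a - ‖b‖^q b = ‖a‖^q (a - b) + (‖a‖^q - ‖b‖^q) b`; convexity of `t ↦ t^q` bounds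
`‖a‖^q - ‖b‖^q` by `q ‖a‖^(q-1) ‖a - b‖`, so the difference is at most
`(1 + q)(‖a‖^q + ‖b‖^q) ‖a - b‖`. Hölder with `1/2 = 1/3 + 1/6` and the identity
`‖ ‖u‖^q ‖_{L³} = ‖u‖_{L^{3q}}^q` then give the estimate with `C = p - 1`.
-/

open MeasureTheory
open scoped ENNReal

lemma rpow_sub_rpow_le {q x y : ℝ} (hq : 1 ≤ q) (hy : 0 ≤ y) (hyx : y ≤ x) :
    x ^ q - y ^ q ≤ q * x ^ (q - 1) * (x - y) := by
  rcases hyx.eq_or_lt with rfl | hlt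
  · simp
  have h := (convexOn_rpow hq).slope_le_of_hasDerivAt hy (hy.trans hlt.le) hlt
    (Real.hasDerivAt_rpow_const (Or.inr hq))
  rwa [slope_def_field, div_le_iff₀ (sub_pos.2 hlt)] at h

section
variable {E : Type*} [NormedAddCommGroup E] [NormedSpace ℝ E] {q : ℝ}

lemma norm_rpow_smul_sub_rpow_smul_le_of_norm_le (hq : 1 ≤ q) {a b : E} (hba : ‖b‖ ≤ ‖a‖) :
    ‖‖a‖ ^ q • a - ‖b‖ ^ q • b‖ ≤ (1 + q) * ‖a‖ ^ q * ‖a - b‖ := by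
  have hsplit : ‖a‖ ^ q • a - ‖b‖ ^ q • b = ‖a‖ ^ q • (a - b) + (‖a‖ ^ q - ‖b‖ ^ q) • b := by
    rw [smul_sub, sub_smul]; abel
  have hdiff : 0 ≤ ‖a‖ ^ q - ‖b‖ ^ q :=
    sub_nonneg.2 (Real.rpow_le_rpow (norm_nonneg b) hba (by linarith))
  have hpow : ‖a‖ ^ (q - 1) * ‖a‖ = ‖a‖ ^ q := by
    rw [← Real.rpow_add_one' (norm_nonneg a) (by linarith), sub_add_cancel]
  calc ‖‖a‖ ^ q • a - ‖b‖ ^ q • b‖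
      ≤ ‖a‖ ^ q * ‖a - b‖ + (‖a‖ ^ q - ‖b‖ ^ q) * ‖b‖ := by
        rw [hsplit]
        refine (norm_add_le _ _).trans_eq ?_
        rw [norm_smul, norm_smul, Real.norm_of_nonneg (by positivity),
          Real.norm_of_nonneg hdiff]
    _ ≤ ‖a‖ ^ q * ‖a - b‖ + q * ‖a‖ ^ (q - 1) * ‖a - b‖ * ‖a‖ := by
        gcongr
        calc ‖a‖ ^ q - ‖b‖ ^ q ≤ q * ‖a‖ ^ (q - 1) * (‖a‖ - ‖b‖) :=
              rpow_sub_rpow_le hq (norm_nonneg b) hba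
          _ ≤ q * ‖a‖ ^ (q - 1) * ‖a - b‖ := by
              gcongr; exact norm_sub_norm_le a b
    _ = (1 + q) * ‖a‖ ^ q * ‖a - b‖ := by rw [← hpow]; ring

lemma norm_rpow_smul_sub_rpow_smul_le (hq : 1 ≤ q) (a b : E) :
    ‖‖a‖ ^ q • a - ‖b‖ ^ q • b‖ ≤ (1 + q) * (‖a‖ ^ q + ‖b‖ ^ q) * ‖a - b‖ := by
  wlog hba : ‖b‖ ≤ ‖a‖ generalizing a b
  · simpa only [norm_sub_rev, add_comm] using this b a (le_of_not_ge hba)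
  refine (norm_rpow_smul_sub_rpow_smul_le_of_norm_le hq hba).trans ?_
  gcongr
  exact le_add_of_nonneg_right (by positivity)

variable {Ω : Type*} [MeasurableSpace Ω] {μ : Measure Ω} {u v : Ω → E}

lemma eLpNorm_rpow_smul_sub_rpow_smul_le {r s t : ℝ≥0∞} [ENNReal.HolderTriple s t r]
    (hq : 1 ≤ q) (hs : 1 ≤ s) (hu : AEStronglyMeasurable u μ) (hv : AEStronglyMeasurable v μ) :
    eLpNorm (fun x => ‖u x‖ ^ q • u x - ‖v x‖ ^ q • v x) r μ ≤
      ENNReal.ofReal (1 + q) *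
        (eLpNorm u (s * ENNReal.ofReal q) μ ^ q + eLpNorm v (s * ENNReal.ofReal q) μ ^ q) *
        eLpNorm (fun x => u x - v x) t μ := by
  have hu_pow : AEStronglyMeasurable (fun x => ‖u x‖ ^ q) μ :=
    (hu.norm.aemeasurable.pow_const q).aestronglyMeasurable
  have hv_pow : AEStronglyMeasurable (fun x => ‖v x‖ ^ q) μ :=
    (hv.norm.aemeasurable.pow_const q).aestronglyMeasurable
  set φ : Ω → ℝ := fun x => (1 + q) * (‖u x‖ ^ q + ‖v x‖ ^ q)
  have hφ : eLpNorm φ s μ ≤ ENNReal.ofReal (1 + q) *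
      (eLpNorm u (s * ENNReal.ofReal q) μ ^ q + eLpNorm v (s * ENNReal.ofReal q) μ ^ q) := by
    have hq0 : 0 < q := by linarith
    calc eLpNorm φ s μ
        = ENNReal.ofReal (1 + q) * eLpNorm ((fun x => ‖u x‖ ^ q) + fun x => ‖v x‖ ^ q) s μ := by
          rw [← Real.enorm_of_nonneg (by linarith), ← eLpNorm_const_smul]; rfl
      _ ≤ _ := by
          gcongr
          refine (eLpNorm_add_le hu_pow hv_pow hs).trans_eq ?_
          rw [eLpNorm_norm_rpow u hq0, eLpNorm_norm_rpow v hq0]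
  calc _ ≤ eLpNorm (φ • fun x => u x - v x) r μ := by
        refine eLpNorm_mono fun x => ?_
        rw [Pi.smul_apply', norm_smul, Real.norm_of_nonneg (by positivity)]
        exact norm_rpow_smul_sub_rpow_smul_le hq (u x) (v x)
    _ ≤ eLpNorm φ s μ * eLpNorm (fun x => u x - v x) t μ :=
        eLpNorm_smul_le_mul_eLpNorm (hu.sub hv)
          (aestronglyMeasurable_const.mul (hu_pow.add hv_pow))
    _ ≤ _ := by gcongr

end

instance : ENNReal.HolderTriple 3 6 2 := ⟨by
  rw [← ENNReal.toReal_eq_toReal_iff' (by finiteness) (by finiteness),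
    ENNReal.toReal_add (by finiteness) (by finiteness)]
  norm_num⟩

theorem power_difference_L2_general {d : ℕ} (p : ℝ) (hp1 : 3 ≤ p) :
    ∃ C : ℝ, 0 < C ∧
      ∀ (Ω : Type u) [MeasurableSpace Ω], ∀ (μ : Measure Ω)
        (u v : Ω → EuclideanSpace ℝ (Fin d)),
        MemLp u (ENNReal.ofReal (3 * (p - 2))) μ → MemLp u 6 μ →
        MemLp v (ENNReal.ofReal (3 * (p - 2))) μ → MemLp v 6 μ →
        (eLpNorm (fun x => (‖u x‖ ^ (p - 2)) • u x - (‖v x‖ ^ (p - 2)) • v x) 2 μ).toReal ≤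
          C * ((eLpNorm u (ENNReal.ofReal (3 * (p - 2))) μ).toReal ^ (p - 2) +
                (eLpNorm v (ENNReal.ofReal (3 * (p - 2))) μ).toReal ^ (p - 2)) *
            (eLpNorm (fun x => u x - v x) 6 μ).toReal := by
  refine ⟨1 + (p - 2), by linarith, fun Ω _ μ u v hur hu6 hvr hv6 => ?_⟩
  have hexp : ENNReal.ofReal (3 * (p - 2)) = 3 * ENNReal.ofReal (p - 2) := by
    rw [ENNReal.ofReal_mul (by norm_num), ENNReal.ofReal_ofNat]
  have key := eLpNorm_rpow_smul_sub_rpow_smul_le (q := p - 2) (r := 2) (s := 3) (t := 6)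
    (by linarith) (by norm_num) hu6.1 hv6.1
  rw [← hexp] at key
  have hu_fin := ENNReal.rpow_ne_top_of_nonneg (y := p - 2) (by linarith) hur.eLpNorm_ne_top
  have hv_fin := ENNReal.rpow_ne_top_of_nonneg (y := p - 2) (by linarith) hvr.eLpNorm_ne_top
  have hd_fin : eLpNorm (fun x => u x - v x) 6 μ ≠ ⊤ := (hu6.sub hv6).eLpNorm_ne_top
  refine (ENNReal.toReal_mono (by finiteness) key).trans_eq ?_
  rw [ENNReal.toReal_mul, ENNReal.toReal_mul, ENNReal.toReal_add (by finiteness) (by finiteness),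
    ENNReal.toReal_ofReal (by linarith), ENNReal.toReal_rpow, ENNReal.toReal_rpow]

/-- For `d ≥ 1` and `p ∈ [3,4]` there is `C > 0` depending only on `p` such that for
every measure `μ` and all `u, v ∈ L^{3(p−2)}(μ; ℝ^d) ∩ L⁶(μ; ℝ^d)`:
`‖ ‖u‖^(p−2) u − ‖v‖^(p−2) v ‖_{L²}
  ≤ C (‖u‖_{L^{3(p−2)}}^(p−2) + ‖v‖_{L^{3(p−2)}}^(p−2)) ‖u−v‖_{L⁶}`. -/
theorem power_difference_L2 {d : ℕ} (hd : 1 ≤ d) (p : ℝ) (hp1 : 3 ≤ p) (hp2 : p ≤ 4) :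
    ∃ C : ℝ, 0 < C ∧
      ∀ (Ω : Type u) [MeasurableSpace Ω], ∀ (μ : Measure Ω)
        (u v : Ω → EuclideanSpace ℝ (Fin d)),
        MemLp u (ENNReal.ofReal (3 * (p - 2))) μ → MemLp u 6 μ →
        MemLp v (ENNReal.ofReal (3 * (p - 2))) μ → MemLp v 6 μ →
        (eLpNorm (fun x => (‖u x‖ ^ (p - 2)) • u x - (‖v x‖ ^ (p - 2)) • v x) 2 μ).toReal ≤
          C * ((eLpNorm u (ENNReal.ofReal (3 * (p - 2))) μ).toReal ^ (p - 2) +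
                (eLpNorm v (ENNReal.ofReal (3 * (p - 2))) μ).toReal ^ (p - 2)) *
            (eLpNorm (fun x => u x - v x) 6 μ).toReal :=
  power_difference_L2_general p hp1
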